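/- Let k^{bc} be a Killing 2-tensor on ℝ^n. Then the second-order differential operator D defined on smooth functions f : ℝ^n → ℝ by D f = k^{bc} ∂_b ∂_c f + (∂_r k^{rc}) ∂_c f commutes with the Laplace operator: Δ∘D = D∘Δ on smooth functions. -/

import Mathlib

noncomputable section

/-- Partial derivative `∂_a f` in the `a`-th coordinate direction on `ℝⁿ`. -/
def pd {n : ℕ} (a : Fin n) (f : (Fin n → ℝ) → ℝ) : (Fin n → ℝ) → ℝ :=
  fun x => fderiv ℝ f x (Pi.single a 1)

/-- Raised partial derivative `∂^a f = g^{ab} ∂_b f`. -/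
def pdUp {n : ℕ} (ginv : Matrix (Fin n) (Fin n) ℝ) (a : Fin n)
    (f : (Fin n → ℝ) → ℝ) : (Fin n → ℝ) → ℝ :=
  fun x => ∑ b, ginv a b * pd b f x

/-- Laplace operator `Δ f = g^{ab} ∂_a ∂_b f`. -/
def lap {n : ℕ} (ginv : Matrix (Fin n) (Fin n) ℝ) (f : (Fin n → ℝ) → ℝ) :
    (Fin n → ℝ) → ℝ :=
  fun x => ∑ a, ∑ b, ginv a b * pd a (pd b f) x

/-- Iterated partial derivative `∂_{i 0} ⋯ ∂_{i (m-1)} f` along a tuple of indices. -/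
def pdIter {n : ℕ} : (m : ℕ) → (Fin m → Fin n) → ((Fin n → ℝ) → ℝ) → ((Fin n → ℝ) → ℝ)
  | 0, _, f => f
  | m + 1, i, f => pd (i 0) (pdIter m (fun j => i j.succ) f)

/-- A (smooth, totally symmetric) Killing `ℓ`-tensor: `∂^{(a₀} k^{a₁…a_ℓ)} = 0`. -/
def IsKillingTensor {n : ℕ} (ginv : Matrix (Fin n) (Fin n) ℝ) (ℓ : ℕ)
    (k : (Fin ℓ → Fin n) → (Fin n → ℝ) → ℝ) : Prop :=
  (∀ i, ContDiff ℝ (⊤ : ℕ∞) (k i)) ∧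
  (∀ (σ : Equiv.Perm (Fin ℓ)) (i : Fin ℓ → Fin n), k (i ∘ σ) = k i) ∧
  (∀ (i : Fin (ℓ + 1) → Fin n) (x : Fin n → ℝ),
    ∑ σ : Equiv.Perm (Fin (ℓ + 1)),
      pdUp ginv (i (σ 0)) (k (fun j => i (σ j.succ))) x = 0)

end

/-!
With `u^c = ∂_r k^{rc}`, the Leibniz rule for `Δ` gives
`Δ (D f) - D (Δ f) = (Δk^{bc} + 2 ∂^b u^c) ∂_b ∂_c f + 2 ∂^a k^{bc} ∂_a ∂_b ∂_c f + Δu^c ∂_c f`.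
The middle term is the Killing equation contracted with the symmetric tensor `∂_a ∂_b ∂_c f`.
The divergence of the Killing equation is `Δk^{bc} + ∂^b u^c + ∂^c u^b = 0`, which kills the
first term. Its trace is `2 u^a + ∂^a (g_{bc} k^{bc}) = 0`, so `u` is a gradient and
`Δu^c = ∂^c (∂_a u^a)`; a further divergence gives `2 Δu^c + ∂^c (∂_a u^a) = 0`,
hence `Δu^c = 0`.
-/

open scoped ContDiff

section Calculus

variable {n : ℕ} {f h : (Fin n → ℝ) → ℝ} {a b : Fin n}

@[fun_prop]
lemma contDiff_pd (hf : ContDiff ℝ ∞ f) (a : Fin n) : ContDiff ℝ ∞ (pd a f) :=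
  (hf.fderiv_right le_rfl).clm_apply contDiff_const

lemma pd_add (hf : Differentiable ℝ f) (hh : Differentiable ℝ h) :
    pd a (fun y => f y + h y) = fun y => pd a f y + pd a h y := by
  ext y
  simp [pd, fderiv_fun_add (hf y) (hh y)]

lemma pd_mul (hf : Differentiable ℝ f) (hh : Differentiable ℝ h) :
    pd a (fun y => f y * h y) = fun y => pd a f y * h y + f y * pd a h y := by
  ext y
  simp only [pd, fderiv_fun_mul (hf y) (hh y), add_apply, smul_apply,
    smul_eq_mul]
  ring

lemma pd_const_mul (c : ℝ) (hf : Differentiable ℝ f) :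
    pd a (fun y => c * f y) = fun y => c * pd a f y := by
  ext y
  simp [pd, fderiv_const_mul (hf y)]

lemma pd_sum {ι : Type*} (s : Finset ι) {F : ι → (Fin n → ℝ) → ℝ}
    (hF : ∀ i ∈ s, Differentiable ℝ (F i)) :
    pd a (fun y => ∑ i ∈ s, F i y) = fun y => ∑ i ∈ s, pd a (F i) y := by
  ext y
  simp [pd, fderiv_fun_sum fun i hi => hF i hi y]

lemma pd_const (c : ℝ) : pd a (fun _ : Fin n → ℝ => c) = 0 := by
  ext y
  simp [pd]

lemma pd_comm (hf : ContDiff ℝ 2 f) : pd a (pd b f) = pd b (pd a f) := by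
  ext y
  have hd : DifferentiableAt ℝ (fderiv ℝ f) y :=
    (hf.fderiv_right one_add_one_eq_two.le).differentiable one_ne_zero y
  have hsnd (v w : Fin n → ℝ) :
      fderiv ℝ (fun z => fderiv ℝ f z v) y w = fderiv ℝ (fderiv ℝ f) y w v := by
    rw [fderiv_clm_apply hd (differentiableAt_const v)]
    simp
  change fderiv ℝ (fun z => fderiv ℝ f z (Pi.single b 1)) y (Pi.single a 1) =
    fderiv ℝ (fun z => fderiv ℝ f z (Pi.single a 1)) y (Pi.single b 1)
  rw [hsnd, hsnd]
  exact hf.contDiffAt.isSymmSndFDerivAt (by simp) _ _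

lemma pd_pd_pd_comm (hf : ContDiff ℝ ∞ f) (a b c : Fin n) :
    pd a (pd b (pd c f)) = pd c (pd a (pd b f)) := by
  rw [pd_comm (a := b) (hf.of_le ENat.LEInfty.out),
    pd_comm (a := a) ((contDiff_pd hf b).of_le ENat.LEInfty.out)]

variable (G : Matrix (Fin n) (Fin n) ℝ)

@[fun_prop]
lemma contDiff_pdUp (hf : ContDiff ℝ ∞ f) (a : Fin n) : ContDiff ℝ ∞ (pdUp G a f) := by
  unfold pdUp
  fun_prop

@[fun_prop]
lemma contDiff_lap (hf : ContDiff ℝ ∞ f) : ContDiff ℝ ∞ (lap G f) := by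
  unfold lap
  fun_prop

lemma pd_pdUp (hf : ContDiff ℝ ∞ f) : pd a (pdUp G b f) = pdUp G b (pd a f) := by
  unfold pdUp
  simp (disch := fun_prop (disch := simp)) only [pd_sum, pd_const_mul]
  simp only [pd_comm (a := a) (hf.of_le ENat.LEInfty.out)]

lemma pdUp_sum {ι : Type*} (s : Finset ι) {F : ι → (Fin n → ℝ) → ℝ}
    (hF : ∀ i ∈ s, Differentiable ℝ (F i)) :
    pdUp G a (fun y => ∑ i ∈ s, F i y) = fun y => ∑ i ∈ s, pdUp G a (F i) y := by
  ext y
  simp only [pdUp, pd_sum s hF, Finset.mul_sum]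
  exact Finset.sum_comm

lemma sum_pd_pdUp (hf : ContDiff ℝ ∞ f) (x : Fin n → ℝ) :
    ∑ a, pd a (pdUp G a f) x = lap G f x := by
  unfold pdUp lap
  simp (disch := fun_prop (disch := simp)) only [pd_sum, pd_const_mul]

lemma pdUp_const_mul (c : ℝ) (hf : Differentiable ℝ f) :
    pdUp G a (fun y => c * f y) = fun y => c * pdUp G a f y := by
  ext y
  simp only [pdUp, pd_const_mul c hf, Finset.mul_sum]
  exact Finset.sum_congr rfl fun b _ => by ring

lemma pd_lap (hf : ContDiff ℝ ∞ f) : pd a (lap G f) = lap G (pd a f) := by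
  unfold lap
  simp (disch := fun_prop (disch := simp)) only [pd_sum, pd_const_mul]
  simp only [pd_pd_pd_comm hf _ _ a]

lemma lap_pdUp (G' : Matrix (Fin n) (Fin n) ℝ) (hf : ContDiff ℝ ∞ f) :
    lap G (pdUp G' a f) = pdUp G' a (lap G f) := by
  unfold lap pdUp
  simp (disch := fun_prop (disch := simp)) only [pd_sum, pd_const_mul, Finset.mul_sum]
  ext y
  rw [Finset.sum_comm_cycle]
  refine Finset.sum_congr rfl fun p _ => Finset.sum_congr rfl fun q _ =>
    Finset.sum_congr rfl fun r _ => ?_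
  rw [pd_pd_pd_comm hf]
  ring

lemma lap_add (hf : ContDiff ℝ ∞ f) (hh : ContDiff ℝ ∞ h) :
    lap G (fun y => f y + h y) = fun y => lap G f y + lap G h y := by
  unfold lap
  simp (disch := fun_prop (disch := simp)) only [pd_add, mul_add, Finset.sum_add_distrib]

lemma lap_sum {ι : Type*} (s : Finset ι) {F : ι → (Fin n → ℝ) → ℝ}
    (hF : ∀ i, ContDiff ℝ ∞ (F i)) :
    lap G (fun y => ∑ i ∈ s, F i y) = fun y => ∑ i ∈ s, lap G (F i) y := by
  unfold lap
  simp (disch := fun_prop (disch := simp)) only [pd_sum, Finset.mul_sum]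
  ext y
  exact Finset.sum_comm_cycle

lemma lap_mul (hG : G.IsSymm) (hf : ContDiff ℝ ∞ f) (hh : ContDiff ℝ ∞ h) :
    lap G (fun y => f y * h y) =
      fun y => lap G f y * h y + 2 * ∑ a, pdUp G a f y * pd a h y + f y * lap G h y := by
  unfold lap pdUp
  simp (disch := fun_prop (disch := simp)) only [pd_add, pd_mul]
  ext y
  simp only [mul_add, Finset.sum_add_distrib, Finset.sum_mul, Finset.mul_sum]
  have hcross : ∑ a, ∑ b, G a b * (pd a f y * pd b h y) =
      ∑ a, ∑ b, G a b * (pd b f y * pd a h y) := by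
    rw [Finset.sum_comm]
    simp only [hG.apply]
  rw [hcross]
  simp only [← Finset.sum_add_distrib]
  exact Finset.sum_congr rfl fun a _ => Finset.sum_congr rfl fun b _ => by ring

end Calculus

section Killing

variable {n : ℕ} {G : Matrix (Fin n) (Fin n) ℝ} {k : Fin n → Fin n → (Fin n → ℝ) → ℝ}
  {f : (Fin n → ℝ) → ℝ}

noncomputable def divergence (k : Fin n → Fin n → (Fin n → ℝ) → ℝ) (c : Fin n) :
    (Fin n → ℝ) → ℝ :=
  fun x => ∑ r, pd r (k r c) x

noncomputable def metricTrace (g : Matrix (Fin n) (Fin n) ℝ)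
    (k : Fin n → Fin n → (Fin n → ℝ) → ℝ) : (Fin n → ℝ) → ℝ :=
  fun x => ∑ b, ∑ c, g b c * k b c x

@[fun_prop]
lemma contDiff_divergence (hk : ∀ b c, ContDiff ℝ ∞ (k b c)) (c : Fin n) :
    ContDiff ℝ ∞ (divergence k c) := by
  unfold divergence
  fun_prop

@[fun_prop]
lemma contDiff_metricTrace (g : Matrix (Fin n) (Fin n) ℝ)
    (hk : ∀ b c, ContDiff ℝ ∞ (k b c)) : ContDiff ℝ ∞ (metricTrace g k) := by
  unfold metricTrace
  fun_prop

lemma pdUp_divergence (hk : ∀ b c, ContDiff ℝ ∞ (k b c)) (b c : Fin n) :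
    pdUp G b (divergence k c) = fun y => ∑ r, pd r (pdUp G b (k r c)) y := by
  unfold divergence
  simp (disch := fun_prop (disch := simp)) only [pdUp_sum, pd_pdUp]

lemma lap_add_pdUp_divergence_add_pdUp_divergence (hk : ∀ b c, ContDiff ℝ ∞ (k b c))
    (hsymk : ∀ b c, k b c = k c b)
    (hkill : ∀ (a b c : Fin n) (x : Fin n → ℝ),
      pdUp G a (k b c) x + pdUp G b (k c a) x + pdUp G c (k a b) x = 0)
    (b c : Fin n) (x : Fin n → ℝ) :
    lap G (k b c) x + pdUp G b (divergence k c) x + pdUp G c (divergence k b) x = 0 := by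
  have hdiv : ∑ r, pd r (fun y => pdUp G r (k b c) y + pdUp G b (k c r) y +
      pdUp G c (k r b) y) x = 0 := by
    simp only [hkill, pd_const, Pi.zero_apply, Finset.sum_const_zero]
  simp (disch := fun_prop (disch := simp)) only [pd_add, Finset.sum_add_distrib,
    sum_pd_pdUp] at hdiv
  simpa only [pdUp_divergence hk, hsymk c] using hdiv

lemma sum_mul_pdUp {g : Matrix (Fin n) (Fin n) ℝ} (hgG : g * G = 1) (b : Fin n)
    (x : Fin n → ℝ) : ∑ c, g b c * pdUp G c f x = pd b f x := by
  simp only [pdUp, Finset.mul_sum, ← mul_assoc]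
  rw [Finset.sum_comm]
  simp only [← Finset.sum_mul, ← Matrix.mul_apply, hgG, Matrix.one_apply, ite_mul, one_mul,
    zero_mul, Finset.sum_ite_eq, Finset.mem_univ, if_true]

lemma two_mul_divergence_add_pdUp_metricTrace {g : Matrix (Fin n) (Fin n) ℝ}
    (hgsym : g.IsSymm) (hgG : g * G = 1) (hk : ∀ b c, ContDiff ℝ ∞ (k b c))
    (hsymk : ∀ b c, k b c = k c b)
    (hkill : ∀ (a b c : Fin n) (x : Fin n → ℝ),
      pdUp G a (k b c) x + pdUp G b (k c a) x + pdUp G c (k a b) x = 0)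
    (a : Fin n) (x : Fin n → ℝ) :
    2 * divergence k a x + pdUp G a (metricTrace g k) x = 0 := by
  have htrace : ∑ b, ∑ c, g b c * (pdUp G a (k b c) x + pdUp G b (k c a) x +
      pdUp G c (k a b) x) = 0 := by
    simp only [hkill, mul_zero, Finset.sum_const_zero]
  have h1 : ∑ b, ∑ c, g b c * pdUp G a (k b c) x = pdUp G a (metricTrace g k) x := by
    unfold metricTrace
    simp (disch := fun_prop (disch := simp)) only [pdUp_sum, pdUp_const_mul]
  have h2 : ∑ b, ∑ c, g b c * pdUp G b (k c a) x = divergence k a x := by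
    rw [Finset.sum_comm]
    simp only [hgsym.apply, sum_mul_pdUp hgG]
    rfl
  have h3 : ∑ b, ∑ c, g b c * pdUp G c (k a b) x = divergence k a x := by
    simp only [sum_mul_pdUp hgG, hsymk a]
    rfl
  simp only [mul_add, Finset.sum_add_distrib, h1, h2, h3] at htrace
  linarith

lemma lap_divergence_eq_zero {g : Matrix (Fin n) (Fin n) ℝ}
    (hgsym : g.IsSymm) (hgG : g * G = 1) (hk : ∀ b c, ContDiff ℝ ∞ (k b c))
    (hsymk : ∀ b c, k b c = k c b)
    (hkill : ∀ (a b c : Fin n) (x : Fin n → ℝ),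
      pdUp G a (k b c) x + pdUp G b (k c a) x + pdUp G c (k a b) x = 0)
    (c : Fin n) (x : Fin n → ℝ) :
    lap G (divergence k c) x = 0 := by
  have hdiv : ∑ b, pd b (fun y => lap G (k b c) y + pdUp G b (divergence k c) y +
      pdUp G c (divergence k b) y) x = 0 := by
    simp only [lap_add_pdUp_divergence_add_pdUp_divergence hk hsymk hkill, pd_const,
      Pi.zero_apply, Finset.sum_const_zero]
  have hlap : ∑ b, pd b (lap G (k b c)) x = lap G (divergence k c) x := by
    unfold divergence
    simp (disch := fun_prop (disch := simp)) only [pd_lap, lap_sum]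
  have hgrad : ∑ b, pd b (pdUp G c (divergence k b)) x =
      pdUp G c (fun y => ∑ b, pd b (divergence k b) y) x := by
    simp (disch := fun_prop (disch := simp)) only [pd_pdUp, pdUp_sum]
  have hpot : ∀ a, divergence k a = pdUp G a (fun y => -(1 / 2) * metricTrace g k y) := by
    intro a
    ext y
    rw [pdUp_const_mul _ _ (by fun_prop (disch := simp))]
    linarith [two_mul_divergence_add_pdUp_metricTrace hgsym hgG hk hsymk hkill a y]
  have hlap_grad : lap G (divergence k c) x =
      pdUp G c (fun y => ∑ b, pd b (divergence k b) y) x := by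
    simp (disch := fun_prop (disch := simp)) only [hpot, lap_pdUp, sum_pd_pdUp]
  simp (disch := fun_prop (disch := simp)) only [pd_add, Finset.sum_add_distrib, hlap,
    sum_pd_pdUp, hgrad] at hdiv
  linarith

lemma sum_pdUp_mul_pd_pd_pd_eq_zero
    (hkill : ∀ (a b c : Fin n) (x : Fin n → ℝ),
      pdUp G a (k b c) x + pdUp G b (k c a) x + pdUp G c (k a b) x = 0)
    (hf : ContDiff ℝ ∞ f) (x : Fin n → ℝ) :
    ∑ b, ∑ c, ∑ a, pdUp G a (k b c) x * pd a (pd b (pd c f)) x = 0 := by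
  have hsum : ∑ b, ∑ c, ∑ a, (pdUp G a (k b c) x + pdUp G b (k c a) x + pdUp G c (k a b) x) *
      pd a (pd b (pd c f)) x = 0 := by
    simp only [hkill, zero_mul, Finset.sum_const_zero]
  have h1 : ∑ b, ∑ c, ∑ a, pdUp G a (k b c) x * pd a (pd b (pd c f)) x =
      ∑ a, ∑ b, ∑ c, pdUp G a (k b c) x * pd a (pd b (pd c f)) x :=
    Finset.sum_comm_cycle
  have h2 : ∑ b, ∑ c, ∑ a, pdUp G b (k c a) x * pd a (pd b (pd c f)) x =
      ∑ a, ∑ b, ∑ c, pdUp G a (k b c) x * pd a (pd b (pd c f)) x :=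
    Finset.sum_congr rfl fun b _ => Finset.sum_congr rfl fun c _ =>
      Finset.sum_congr rfl fun a _ => by rw [← pd_pd_pd_comm hf b c a]
  have h3 : ∑ b, ∑ c, ∑ a, pdUp G c (k a b) x * pd a (pd b (pd c f)) x =
      ∑ a, ∑ b, ∑ c, pdUp G a (k b c) x * pd a (pd b (pd c f)) x := by
    conv_lhs => rw [← Finset.sum_comm_cycle]
    exact Finset.sum_congr rfl fun c _ => Finset.sum_congr rfl fun a _ =>
      Finset.sum_congr rfl fun b _ => by rw [pd_pd_pd_comm hf a b c]
  simp only [add_mul, Finset.sum_add_distrib, h2, h3] at hsum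
  linarith

lemma sum_lap_mul_pd_pd (hk : ∀ b c, ContDiff ℝ ∞ (k b c)) (hsymk : ∀ b c, k b c = k c b)
    (hkill : ∀ (a b c : Fin n) (x : Fin n → ℝ),
      pdUp G a (k b c) x + pdUp G b (k c a) x + pdUp G c (k a b) x = 0)
    (hf : ContDiff ℝ 2 f) (x : Fin n → ℝ) :
    ∑ b, ∑ c, lap G (k b c) x * pd b (pd c f) x =
      -(2 * ∑ c, ∑ a, pdUp G a (divergence k c) x * pd a (pd c f) x) := by
  have hsum : ∑ b, ∑ c, (lap G (k b c) x + pdUp G b (divergence k c) x +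
      pdUp G c (divergence k b) x) * pd b (pd c f) x = 0 := by
    simp only [lap_add_pdUp_divergence_add_pdUp_divergence hk hsymk hkill, zero_mul,
      Finset.sum_const_zero]
  have h2 : ∑ b, ∑ c, pdUp G b (divergence k c) x * pd b (pd c f) x =
      ∑ c, ∑ a, pdUp G a (divergence k c) x * pd a (pd c f) x :=
    Finset.sum_comm
  have h3 : ∑ b, ∑ c, pdUp G c (divergence k b) x * pd b (pd c f) x =
      ∑ c, ∑ a, pdUp G a (divergence k c) x * pd a (pd c f) x :=
    Finset.sum_congr rfl fun c _ => Finset.sum_congr rfl fun a _ => by rw [pd_comm hf]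
  simp only [add_mul, Finset.sum_add_distrib, h2, h3] at hsum
  linarith

end Killing

theorem stmt9_general {n : ℕ}
    (g ginv : Matrix (Fin n) (Fin n) ℝ) (hgsym : g.IsSymm) (hginv : g * ginv = 1)
    (k : Fin n → Fin n → (Fin n → ℝ) → ℝ)
    (hsmooth : ∀ b c, ContDiff ℝ (⊤ : ℕ∞) (k b c))
    (hsymk : ∀ b c, k b c = k c b)
    (hkill : ∀ (a b c : Fin n) (x : Fin n → ℝ),
      pdUp ginv a (k b c) x + pdUp ginv b (k c a) x + pdUp ginv c (k a b) x = 0)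
    (D : ((Fin n → ℝ) → ℝ) → ((Fin n → ℝ) → ℝ))
    (hD : ∀ f x, D f x =
      (∑ b, ∑ c, k b c x * pd b (pd c f) x) +
        ∑ c, (∑ r, pd r (k r c) x) * pd c f x) :
    ∀ f, ContDiff ℝ (⊤ : ℕ∞) f → ∀ x, lap ginv (D f) x = D (lap ginv f) x := by
  intro f hf x
  have hginv_symm : ginv.IsSymm := Matrix.inv_eq_right_inv hginv ▸ hgsym.inv
  have hD' : ∀ h, D h = fun y =>
      (∑ b, ∑ c, k b c y * pd b (pd c h) y) + ∑ c, divergence k c y * pd c h y :=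
    fun h => funext (hD h)
  rw [hD', hD']
  simp (disch := fun_prop (disch := simp)) only [lap_add, lap_sum, lap_mul _ hginv_symm,
    pd_lap, lap_divergence_eq_zero hgsym hginv hsmooth hsymk hkill]
  simp only [zero_mul, zero_add, Finset.sum_add_distrib, ← Finset.mul_sum,
    sum_pdUp_mul_pd_pd_pd_eq_zero hkill hf,
    sum_lap_mul_pd_pd hsmooth hsymk hkill (hf.of_le ENat.LEInfty.out)]
  ring

/-- for a Killing 2-tensor `k` on `ℝⁿ`, the second order operator
`D f = k^{bc} ∂_b ∂_c f + (∂_r k^{rc}) ∂_c f` commutes with the Laplacian. -/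
theorem stmt9 {n : ℕ} (hn : 0 < n)
    (g ginv : Matrix (Fin n) (Fin n) ℝ) (hgsym : g.IsSymm) (hginv : g * ginv = 1)
    (k : Fin n → Fin n → (Fin n → ℝ) → ℝ)
    (hsmooth : ∀ b c, ContDiff ℝ (⊤ : ℕ∞) (k b c))
    (hsymk : ∀ b c, k b c = k c b)
    (hkill : ∀ (a b c : Fin n) (x : Fin n → ℝ),
      pdUp ginv a (k b c) x + pdUp ginv b (k c a) x + pdUp ginv c (k a b) x = 0)
    (D : ((Fin n → ℝ) → ℝ) → ((Fin n → ℝ) → ℝ))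
    (hD : ∀ f x, D f x =
      (∑ b, ∑ c, k b c x * pd b (pd c f) x) +
        ∑ c, (∑ r, pd r (k r c) x) * pd c f x) :
    ∀ f, ContDiff ℝ (⊤ : ℕ∞) f → ∀ x, lap ginv (D f) x = D (lap ginv f) x :=
  stmt9_general g ginv hgsym hginv k hsmooth hsymk hkill D hD
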